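/- arXiv:nlin/0204058 — 9 statements merged into one kernel-verified Lean document; each statement's English description precedes it below -/
import Mathlib

section
/- There exists a matrix-valued function Ψ : ℂ → M_N(ℂ) whose entries are analytic at k₁, such that Ψ(k) = Φ(k)·(I + ((k₁−k̄₁)/(k−k₁))P) for all k ≠ k₁ in some punctured neighborhood of k₁, and Ψ(k₁) = Φ(k₁) + (k₁−k̄₁)·Φ'(k₁)·P, where Φ' denotes the entrywise complex derivative. In particular, the singularity of Φ(k)χ(k)^{-1} at k = k₁ is removable. -/
open scoped Matrix Topology
open Matrix Filter

/-! Since `Φ(k₁) vⱼ = 0` for every `j`, also `Φ(k₁) P = 0`, so for `k ≠ k₁`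
`Φ(k) (k₁ - k̄₁)/(k - k₁) P = (k₁ - k̄₁) ((Φ(k) - Φ(k₁))/(k - k₁)) P`.
The difference quotient extends analytically across `k₁` (entrywise `dslope`) with value
`Φ'(k₁)` there, which gives `Ψ`. -/

theorem AnalyticAt.dslope {𝕜 E : Type*} [NontriviallyNormedField 𝕜] [NormedAddCommGroup E]
    [NormedSpace 𝕜 E] {f : 𝕜 → E} {z : 𝕜} (hf : AnalyticAt 𝕜 f z) :
    AnalyticAt 𝕜 (_root_.dslope f z) z :=
  let ⟨p, hp⟩ := hf
  ⟨p.fslope, hp.has_fpower_series_dslope_fslope⟩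

theorem Matrix.mul_sum_smul_vecMulVec_eq_zero {α l m n ι κ : Type*} [CommSemiring α]
    [Fintype m] [Fintype ι] [Fintype κ] (M : Matrix l m α) (c : ι → κ → α)
    (x : ι → m → α) (y : κ → n → α) (hx : ∀ i, M *ᵥ x i = 0) :
    M * ∑ i, ∑ j, c i j • vecMulVec (x i) (y j) = 0 := by
  simp [Matrix.mul_sum, Matrix.mul_smul, mul_vecMulVec, hx]

section EntrywiseDslope

variable {𝕜 : Type*} [NontriviallyNormedField 𝕜] {l m n : Type*}

noncomputable def entrywiseDslope (A : 𝕜 → Matrix l n 𝕜) (z k : 𝕜) : Matrix l n 𝕜 :=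
  of fun a b => dslope (fun k => A k a b) z k

theorem entrywiseDslope_of_ne (A : 𝕜 → Matrix l n 𝕜) {z k : 𝕜} (h : k ≠ z) :
    entrywiseDslope A z k = (k - z)⁻¹ • (A k - A z) := by
  ext a b
  simp [entrywiseDslope, dslope_of_ne _ h, slope_def_field, div_eq_inv_mul]

theorem entrywiseDslope_self (A : 𝕜 → Matrix l n 𝕜) (z : 𝕜) :
    entrywiseDslope A z z = of fun a b => deriv (fun k => A k a b) z := by
  ext a b
  simp [entrywiseDslope, dslope_same]

theorem analyticAt_entrywiseDslope_apply {A : 𝕜 → Matrix l n 𝕜} {z : 𝕜}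
    (hA : ∀ a b, AnalyticAt 𝕜 (fun k => A k a b) z) (a : l) (b : n) :
    AnalyticAt 𝕜 (fun k => entrywiseDslope A z k a b) z :=
  (hA a b).dslope

theorem analyticAt_mul_const_apply [Fintype m] {F : 𝕜 → Matrix l m 𝕜} {z : 𝕜}
    (hF : ∀ a b, AnalyticAt 𝕜 (fun k => F k a b) z) (P : Matrix m n 𝕜) (a : l) (b : n) :
    AnalyticAt 𝕜 (fun k => (F k * P) a b) z := by
  simp only [mul_apply]
  exact Finset.analyticAt_fun_sum _ fun c _ => (hF a c).mul analyticAt_const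

theorem mul_one_add_div_smul_eq [Fintype n] [DecidableEq n] {A : 𝕜 → Matrix l n 𝕜}
    {P : Matrix n n 𝕜} {z : 𝕜} (hAP : A z * P = 0) (c : 𝕜) {k : 𝕜} (hk : k ≠ z) :
    A k * (1 + (c / (k - z)) • P) = A k + c • (entrywiseDslope A z k * P) := by
  rw [entrywiseDslope_of_ne A hk, Matrix.smul_mul, Matrix.sub_mul, hAP, sub_zero, Matrix.mul_add,
    Matrix.mul_one, Matrix.mul_smul, smul_smul, div_eq_mul_inv]

theorem exists_analyticAt_eq_mul_one_add_div_smul [Fintype n] [DecidableEq n]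
    {A : 𝕜 → Matrix l n 𝕜} {z : 𝕜} (hA : ∀ a b, AnalyticAt 𝕜 (fun k => A k a b) z)
    {P : Matrix n n 𝕜} (hAP : A z * P = 0) (c : 𝕜) :
    ∃ Ψ : 𝕜 → Matrix l n 𝕜,
      (∀ a b, AnalyticAt 𝕜 (fun k => Ψ k a b) z) ∧
      (∀ᶠ k in 𝓝[≠] z, Ψ k = A k * (1 + (c / (k - z)) • P)) ∧
      Ψ z = A z + c • ((of fun a b => deriv (fun k => A k a b) z) * P) := by
  refine ⟨fun k => A k + c • (entrywiseDslope A z k * P), fun a b => ?_, ?_, ?_⟩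
  · exact (hA a b).add <|
      (analyticAt_mul_const_apply (analyticAt_entrywiseDslope_apply hA) P a b).const_smul (c := c)
  · filter_upwards [self_mem_nhdsWithin] with k hk
    exact (mul_one_add_div_smul_eq hAP c hk).symm
  · simp only [entrywiseDslope_self]

end EntrywiseDslope

theorem removable_singularity_general (N m : ℕ)
    (k₁ kb : ℂ)
    (v w : Fin m → Fin N → ℂ)
    (K : Matrix (Fin m) (Fin m) ℂ)
    (P : Matrix (Fin N) (Fin N) ℂ)
    (hP : P = ∑ i, ∑ j, K⁻¹ i j • Matrix.vecMulVec (v i) (w j))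
    (Φ : ℂ → Matrix (Fin N) (Fin N) ℂ)
    (hΦ : ∀ a b, AnalyticAt ℂ (fun k => Φ k a b) k₁)
    (hker : ∀ j, Φ k₁ *ᵥ v j = 0) :
    ∃ Ψ : ℂ → Matrix (Fin N) (Fin N) ℂ,
      (∀ a b, AnalyticAt ℂ (fun k => Ψ k a b) k₁) ∧
      (∀ᶠ k in nhdsWithin k₁ {k₁}ᶜ,
        Ψ k = Φ k * (1 + ((k₁ - kb) / (k - k₁)) • P)) ∧
      Ψ k₁ = Φ k₁ +
        (k₁ - kb) • ((Matrix.of fun a b => deriv (fun k => Φ k a b) k₁) * P) := by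
  have hΦP : Φ k₁ * P = 0 := hP ▸ mul_sum_smul_vecMulVec_eq_zero _ _ _ _ hker
  exact exists_analyticAt_eq_mul_one_add_div_smul hΦ hΦP (k₁ - kb)

/-- If `Φ` has entries analytic at `k₁` and `Φ(k₁) v_j = 0` for all `j`,
then `Φ(k)χ(k)⁻¹` extends analytically across `k₁`, with value
`Φ(k₁) + (k₁−k̄₁)Φ'(k₁)P` at `k₁`. -/
theorem removable_singularity (N m : ℕ) (hN : 1 ≤ N) (hm : 1 ≤ m)
    (k₁ kb : ℂ) (hk : k₁ ≠ kb)
    (v w : Fin m → Fin N → ℂ)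
    (K : Matrix (Fin m) (Fin m) ℂ)
    (hK : ∀ i j, K i j = ∑ a, w i a * v j a)
    (hKunit : IsUnit K)
    (P : Matrix (Fin N) (Fin N) ℂ)
    (hP : P = ∑ i, ∑ j, K⁻¹ i j • Matrix.vecMulVec (v i) (w j))
    (Φ : ℂ → Matrix (Fin N) (Fin N) ℂ)
    (hΦ : ∀ a b, AnalyticAt ℂ (fun k => Φ k a b) k₁)
    (hker : ∀ j, Φ k₁ *ᵥ v j = 0) :
    ∃ Ψ : ℂ → Matrix (Fin N) (Fin N) ℂ,
      (∀ a b, AnalyticAt ℂ (fun k => Ψ k a b) k₁) ∧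
      (∀ᶠ k in nhdsWithin k₁ {k₁}ᶜ,
        Ψ k = Φ k * (1 + ((k₁ - kb) / (k - k₁)) • P)) ∧
      Ψ k₁ = Φ k₁ +
        (k₁ - kb) • ((Matrix.of fun a b => deriv (fun k => Φ k a b) k₁) * P) :=
  removable_singularity_general N m k₁ kb v w K P hP Φ hΦ hker
end

section
/- Let Ψ : ℂ → M_N(ℂ) have entries analytic at k₁ and satisfy Ψ(k) = Φ(k)·(I + ((k₁−k̄₁)/(k−k₁))P) for all k ≠ k₁ in some punctured neighborhood of k₁. Then the only vector u ∈ ℂ^N satisfying both Ψ(k₁)·u = 0 and ⟨w_j|u⟩ = 0 for all j = 1,…,m is u = 0. -/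
open scoped BigOperators Matrix

/-- Corollary 1: If the kernel of `Φ(k₁)` is exactly the span of
`v_1,…,v_m`, then the only vector in the kernel of `Ψ(k₁)` orthogonal to all
`w_j` is the zero vector. -/
theorem no_new_kernel_vector (N m : ℕ) (hN : 1 ≤ N) (hm : 1 ≤ m)
    (k₁ kb : ℂ) (hk : k₁ ≠ kb)
    (v w : Fin m → Fin N → ℂ)
    (K : Matrix (Fin m) (Fin m) ℂ)
    (hK : ∀ i j, K i j = ∑ a, w i a * v j a)
    (hKunit : IsUnit K)
    (P : Matrix (Fin N) (Fin N) ℂ)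
    (hP : P = ∑ i, ∑ j, K⁻¹ i j • Matrix.vecMulVec (v i) (w j))
    (Φ : ℂ → Matrix (Fin N) (Fin N) ℂ)
    (hΦ : ∀ a b, AnalyticAt ℂ (fun k => Φ k a b) k₁)
    (hker : ∀ u : Fin N → ℂ, Φ k₁ *ᵥ u = 0 ↔ u ∈ Submodule.span ℂ (Set.range v))
    (Ψ : ℂ → Matrix (Fin N) (Fin N) ℂ)
    (hΨ : ∀ a b, AnalyticAt ℂ (fun k => Ψ k a b) k₁)
    (hΨΦ : ∀ᶠ k in nhdsWithin k₁ {k₁}ᶜ,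
      Ψ k = Φ k * (1 + ((k₁ - kb) / (k - k₁)) • P))
    (u : Fin N → ℂ)
    (hu : Ψ k₁ *ᵥ u = 0)
    (horth : ∀ j, ∑ a, w j a * u a = 0) :
    u = 0 := by
  -- Step 1: P *ᵥ u = 0
  have hvecmul : ∀ i j, Matrix.vecMulVec (v i) (w j) *ᵥ u = (∑ a, w j a * u a) • v i := by
    intro i j
    ext b
    simp [Matrix.vecMulVec, Matrix.mulVec, dotProduct, Finset.mul_sum, mul_assoc,
      mul_comm, mul_left_comm]
  have hPu : P *ᵥ u = 0 := by
    subst hP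
    ext b
    simp only [Matrix.mulVec, dotProduct, Matrix.sum_apply, Matrix.smul_apply,
      smul_eq_mul, Pi.zero_apply, Finset.sum_mul]
    rw [Finset.sum_comm]
    refine Finset.sum_eq_zero fun i _ => ?_
    rw [Finset.sum_comm]
    refine Finset.sum_eq_zero fun j _ => ?_
    have : ∑ a, K⁻¹ i j * Matrix.vecMulVec (v i) (w j) b a * u a
        = K⁻¹ i j * ((∑ a, w j a * u a) * v i b) := by
      simp [Matrix.vecMulVec, Finset.mul_sum, Finset.sum_mul, mul_assoc, mul_comm, mul_left_comm]
    rw [this, horth j, zero_mul, mul_zero]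
  -- Step 2: eventually Ψ k *ᵥ u = Φ k *ᵥ u
  have heq : ∀ᶠ k in nhdsWithin k₁ {k₁}ᶜ, Ψ k *ᵥ u = Φ k *ᵥ u := by
    filter_upwards [hΨΦ] with k hkk
    rw [hkk, ← Matrix.mulVec_mulVec, Matrix.add_mulVec, Matrix.one_mulVec,
      Matrix.smul_mulVec, hPu, smul_zero, add_zero]
  -- Step 3: continuity of k ↦ (Ψ k *ᵥ u) a, (Φ k *ᵥ u) a, pass to limit
  have hΨk : Ψ k₁ *ᵥ u = Φ k₁ *ᵥ u := by
    ext a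
    have hcΨ : ContinuousAt (fun k => (Ψ k *ᵥ u) a) k₁ := by
      simp only [Matrix.mulVec, dotProduct]
      exact (Finset.univ.analyticAt_fun_sum fun b _ => (hΨ a b).fun_mul analyticAt_const).continuousAt
    have hcΦ : ContinuousAt (fun k => (Φ k *ᵥ u) a) k₁ := by
      simp only [Matrix.mulVec, dotProduct]
      exact (Finset.univ.analyticAt_fun_sum fun b _ => (hΦ a b).fun_mul analyticAt_const).continuousAt
    have h1 : Filter.Tendsto (fun k => (Ψ k *ᵥ u) a) (nhdsWithin k₁ {k₁}ᶜ)
        (nhds ((Ψ k₁ *ᵥ u) a)) := hcΨ.continuousWithinAt.tendsto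
    have h2 : Filter.Tendsto (fun k => (Ψ k *ᵥ u) a) (nhdsWithin k₁ {k₁}ᶜ)
        (nhds ((Φ k₁ *ᵥ u) a)) := by
      refine Filter.Tendsto.congr' ?_ hcΦ.continuousWithinAt.tendsto
      filter_upwards [heq] with k hkk using (congrFun hkk a).symm
    exact tendsto_nhds_unique h1 h2
  -- Step 4: u in span
  have hspan : u ∈ Submodule.span ℂ (Set.range v) := (hker u).1 (hΨk ▸ hu)
  obtain ⟨c, hc⟩ := (Submodule.mem_span_range_iff_exists_fun ℂ).1 hspan
  -- Step 5: K *ᵥ c = 0, hence c = 0, hence u = 0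
  have hKc : K *ᵥ c = 0 := by
    ext j
    have : (K *ᵥ c) j = ∑ a, w j a * u a := by
      simp only [Matrix.mulVec, dotProduct, hK, ← hc, Finset.sum_apply, Pi.smul_apply,
        smul_eq_mul, Finset.sum_mul, Finset.mul_sum]
      rw [Finset.sum_comm]
      exact Finset.sum_congr rfl fun a _ => Finset.sum_congr rfl fun i _ => by ring
    rw [this, horth j, Pi.zero_apply]
  have hdet : IsUnit K.det := (Matrix.isUnit_iff_isUnit_det K).1 hKunit
  have hc0 : c = 0 := by
    have := congrArg (fun x => K⁻¹ *ᵥ x) hKc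
    simpa [Matrix.mulVec_mulVec, Matrix.nonsing_inv_mul K hdet] using this
  rw [← hc, hc0]
  simp
end

section
/- The kernel of the linear map u ↦ (Φ(k₁) + (k₁−k̄₁)·Φ'(k₁)·P)·u on ℂ^N has dimension at most r; equivalently, the matrix Φ(k₁) + (k₁−k̄₁)Φ'(k₁)P, which is the value at k₁ of the analytic continuation of Φ(k)χ(k)^{-1} across k₁, has rank at least N − r. -/
open scoped BigOperators Matrix


private lemma sum_mulVec' {ι m n : Type*} [Fintype n] (s : Finset ι)
    (A : ι → Matrix m n ℂ) (x : n → ℂ) :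
    (∑ i ∈ s, A i) *ᵥ x = ∑ i ∈ s, (A i) *ᵥ x := by
  ext a
  simp only [Matrix.mulVec, dotProduct, Matrix.sum_apply, Finset.sum_apply, Finset.sum_mul]
  exact Finset.sum_comm

/-- Lemma 2: If the kernel of `Φ(k₁)` is exactly the span of
`v_1,…,v_r`, then the kernel of `Φ(k₁) + (k₁−k̄₁)Φ'(k₁)P` (the value at `k₁` of
the continuation of `Φ(k)χ(k)⁻¹`) has dimension at most `r`; equivalently its
rank is at least `N − r`. -/
theorem kernel_dim_bound (N r : ℕ) (hN : 1 ≤ N) (hr : 1 ≤ r)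
    (k₁ kb : ℂ) (hk : k₁ ≠ kb)
    (v w : Fin r → Fin N → ℂ)
    (K : Matrix (Fin r) (Fin r) ℂ)
    (hK : ∀ i j, K i j = ∑ a, w i a * v j a)
    (hKunit : IsUnit K)
    (P : Matrix (Fin N) (Fin N) ℂ)
    (hP : P = ∑ i, ∑ j, K⁻¹ i j • Matrix.vecMulVec (v i) (w j))
    (Φ : ℂ → Matrix (Fin N) (Fin N) ℂ)
    (hΦ : ∀ a b, AnalyticAt ℂ (fun k => Φ k a b) k₁)
    (hker : ∀ u : Fin N → ℂ, Φ k₁ *ᵥ u = 0 ↔ u ∈ Submodule.span ℂ (Set.range v)) :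
    Module.finrank ℂ
        (LinearMap.ker ((Φ k₁ +
          (k₁ - kb) • ((Matrix.of fun a b => deriv (fun k => Φ k a b) k₁) * P)).mulVecLin))
      ≤ r ∧
    N - r ≤ (Φ k₁ +
          (k₁ - kb) • ((Matrix.of fun a b => deriv (fun k => Φ k a b) k₁) * P)).rank := by
  set M := Φ k₁ +
      (k₁ - kb) • ((Matrix.of fun a b => deriv (fun k => Φ k a b) k₁) * P) with hM
  have hKdet : IsUnit K.det := (Matrix.isUnit_iff_isUnit_det K).mp hKunit
  have hinv : K⁻¹ * K = 1 := Matrix.nonsing_inv_mul K hKdet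
  -- `P` acts as the identity on each `v j₀`
  have hPv : ∀ j₀, P *ᵥ v j₀ = v j₀ := by
    intro j₀
    rw [hP]
    have h1 : (∑ i, ∑ j, K⁻¹ i j • Matrix.vecMulVec (v i) (w j)) *ᵥ v j₀
        = ∑ i, ∑ j, (K⁻¹ i j * K j j₀) • v i := by
      rw [sum_mulVec' _ _ _]
      refine Finset.sum_congr rfl fun i _ => ?_
      rw [sum_mulVec' _ _ _]
      refine Finset.sum_congr rfl fun j _ => ?_
      ext a
      simp [Matrix.mulVec, Matrix.vecMulVec_apply, hK, Finset.mul_sum, dotProduct,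
        Finset.sum_mul, mul_assoc, mul_comm, mul_left_comm]
    rw [h1]
    have h2 : ∑ i, ∑ j, (K⁻¹ i j * K j j₀) • v i = ∑ i, ((K⁻¹ * K) i j₀) • v i := by
      refine Finset.sum_congr rfl fun i _ => ?_
      rw [Matrix.mul_apply, Finset.sum_smul]
    rw [h2, hinv]
    simp [Matrix.one_apply]
  -- hence `P` is the identity on the span of the `v`'s
  have hPspan : ∀ u ∈ Submodule.span ℂ (Set.range v), P *ᵥ u = u := by
    intro u hu
    induction hu using Submodule.span_induction with
    | mem x hx => obtain ⟨j, rfl⟩ := hx; exact hPv j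
    | zero => simp
    | add x y _ _ hx hy => rw [Matrix.mulVec_add, hx, hy]
    | smul c x _ hx => rw [Matrix.mulVec_smul, hx]
  -- the range of `P` lies in the span of the `v`'s
  have hrange : ∀ u : Fin N → ℂ, P *ᵥ u ∈ Submodule.span ℂ (Set.range v) := by
    intro u
    rw [hP, sum_mulVec' _ _ _]
    refine Submodule.sum_mem _ fun i _ => ?_
    rw [sum_mulVec' _ _ _]
    refine Submodule.sum_mem _ fun j _ => ?_
    have h3 : (K⁻¹ i j • Matrix.vecMulVec (v i) (w j)) *ᵥ u
        = (K⁻¹ i j * (w j ⬝ᵥ u)) • v i := by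
      ext a
      simp [Matrix.mulVec, Matrix.vecMulVec_apply, dotProduct, Finset.mul_sum,
        mul_assoc, mul_comm, mul_left_comm]
    rw [h3]
    exact Submodule.smul_mem _ _ (Submodule.subset_span ⟨i, rfl⟩)
  -- `P` is injective on the kernel of `M`
  have hinj : ∀ u, M *ᵥ u = 0 → P *ᵥ u = 0 → u = 0 := by
    intro u hu hPu
    have h1 : Φ k₁ *ᵥ u = 0 := by
      have := hu
      rw [hM, Matrix.add_mulVec, Matrix.smul_mulVec, ← Matrix.mulVec_mulVec,
        hPu, Matrix.mulVec_zero, smul_zero, add_zero] at this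
      exact this
    have h2 : u ∈ Submodule.span ℂ (Set.range v) := (hker u).mp h1
    rw [hPspan u h2] at hPu
    exact hPu
  -- the span of the `v`'s has dimension at most `r`
  have hspanfin : Module.finrank ℂ (Submodule.span ℂ (Set.range v)) ≤ r := by
    classical
    calc Module.finrank ℂ (Submodule.span ℂ (Set.range v))
        ≤ (Set.range v).toFinset.card := finrank_span_le_card _
      _ ≤ r := by
          rw [Set.toFinset_range]
          exact (Finset.card_image_le).trans (by simp)
  -- the injective map from ker M into span v
  let S := Submodule.span ℂ (Set.range v)
  let g : LinearMap.ker M.mulVecLin →ₗ[ℂ] S :=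
    LinearMap.codRestrict S (P.mulVecLin.comp (LinearMap.ker M.mulVecLin).subtype)
      (fun u => hrange u)
  have hginj : Function.Injective g := by
    intro u₁ u₂ hu
    have h4 : P *ᵥ ((u₁ : Fin N → ℂ) - u₂) = 0 := by
      have := congrArg (Subtype.val) hu
      simp only [g, LinearMap.codRestrict_apply, LinearMap.comp_apply,
        Matrix.mulVecLin_apply, Submodule.subtype_apply] at this
      rw [Matrix.mulVec_sub, sub_eq_zero]
      exact this
    have h5 : M *ᵥ ((u₁ : Fin N → ℂ) - u₂) = 0 := by
      rw [Matrix.mulVec_sub]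
      have h6 : M *ᵥ (u₁ : Fin N → ℂ) = 0 := u₁.2
      have h7 : M *ᵥ (u₂ : Fin N → ℂ) = 0 := u₂.2
      rw [h6, h7, sub_self]
    have := hinj _ h5 h4
    exact Subtype.ext (sub_eq_zero.mp this)
  have hkerle : Module.finrank ℂ (LinearMap.ker M.mulVecLin) ≤ r :=
    (LinearMap.finrank_le_finrank_of_injective hginj).trans hspanfin
  refine ⟨hkerle, ?_⟩
  -- rank-nullity
  have hrn : M.rank + Module.finrank ℂ (LinearMap.ker M.mulVecLin) = N := by
    have := LinearMap.finrank_range_add_finrank_ker M.mulVecLin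
    rw [Matrix.rank]
    rw [Module.finrank_pi] at this
    simpa using this
  omega
end

section
/- There exist vectors q̄_1,…,q̄_n ∈ ℂ^N and p̄_1,…,p̄_n ∈ ℂ^N such that for every k ∈ ℂ with k ≠ k̄₁, the soliton matrix Γ(k) = χ_n(k)·χ_{n−1}(k)···χ_1(k) admits the representation Γ(k) = I + Σ_{l=1}^n Σ_{j=1}^l (k−k̄₁)^{-(n+1−l)} · q̄_j p̄_{l+1−j}^T, where q̄ p̄^T denotes the N×N outer-product matrix. -/
/-!
With `z = (k - k̄₁)⁻¹` the claim is an identity between polynomials in `z`, proved for every `z`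
by induction on the number of factors. If `Γ_m - I = ∑_{l<m} z^{m-l} ∑_{j≤l} q_j p_{l-j}ᵀ` and
`V = v_m w_mᵀ`, then `(I + zV) Γ_m` has the same shape with `Q = (0, q_0, q_1, …) + (Vq_0, Vq_1, …)`
and any `P` agreeing with `p` below `m`, provided the new top coefficient works out:
`∑_{j≤m} ⟨w_m|q_j⟩ P_{m-j} = w_m`. This is one linear equation for `P_m`, solvable because `q_0` is
a nonzero multiple of `v_{m-1}`, so that `⟨w_m|q_0⟩ ≠ 0` by elementarity; and
`Q_0 = ⟨w_m|q_0⟩ v_m` keeps the induction going.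
-/

open scoped Matrix
open Finset Matrix

namespace SolitonMatrix

section Horner

variable {R M : Type*} [CommSemiring R] [AddCommMonoid M] [Module R M]

/-- `∑ l < m, z ^ (m - l) • C l` in Horner form. -/
def hornerSum (C : ℕ → M) : ℕ → R → M
  | 0, _ => 0
  | m + 1, z => z • (hornerSum C m z + C m)

def delay (C : ℕ → M) : ℕ → M
  | 0 => 0
  | i + 1 => C i

@[simp] lemma hornerSum_zero (C : ℕ → M) (z : R) : hornerSum C 0 z = 0 := rfl

lemma hornerSum_succ (C : ℕ → M) (m : ℕ) (z : R) :
    hornerSum C (m + 1) z = z • (hornerSum C m z + C m) := rfl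

lemma hornerSum_eq_sum (C : ℕ → M) (m : ℕ) (z : R) :
    hornerSum C m z = ∑ l ∈ range m, z ^ (m - l) • C l := by
  induction m with
  | zero => simp
  | succ m ih =>
    rw [hornerSum_succ, ih, sum_range_succ, Nat.add_sub_cancel_left, pow_one, smul_add,
      smul_sum]
    congr 1
    refine sum_congr rfl fun l hl => ?_
    rw [smul_smul, ← pow_succ', Nat.sub_add_comm (mem_range.1 hl).le]

lemma hornerSum_congr {C E : ℕ → M} {m : ℕ} (h : ∀ l < m, C l = E l) (z : R) :
    hornerSum C m z = hornerSum E m z := by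
  induction m with
  | zero => rfl
  | succ m ih =>
    rw [hornerSum_succ, hornerSum_succ, ih fun l hl => h l (by omega), h m m.lt_succ_self]

lemma hornerSum_add (C E : ℕ → M) (m : ℕ) (z : R) :
    hornerSum (C + E) m z = hornerSum C m z + hornerSum E m z := by
  induction m with
  | zero => simp
  | succ m ih =>
    rw [hornerSum_succ, hornerSum_succ, hornerSum_succ, ih, Pi.add_apply, ← smul_add,
      add_add_add_comm]

lemma hornerSum_delay (C : ℕ → M) (m : ℕ) (z : R) :
    hornerSum (delay C) (m + 1) z = hornerSum C m z := by
  induction m with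
  | zero => simp [hornerSum_succ, delay]
  | succ m ih => rw [hornerSum_succ, ih, hornerSum_succ, delay]

variable {A : Type*} [Semiring A] [Algebra R A]

lemma hornerSum_mul_left (V : A) (C : ℕ → A) (m : ℕ) (z : R) :
    hornerSum (fun l => V * C l) m z = V * hornerSum C m z := by
  induction m with
  | zero => simp
  | succ m ih => rw [hornerSum_succ, hornerSum_succ, ih, mul_smul_comm, mul_add]

lemma one_add_smul_mul_one_add_hornerSum (V : A) (C : ℕ → A) {m : ℕ} (hm : V * C m = V)
    (z : R) :
    (1 + z • V) * (1 + hornerSum C m z) =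
      1 + hornerSum (delay C + fun l => V * C l) (m + 1) z := by
  rw [hornerSum_add, hornerSum_delay, hornerSum_succ, hornerSum_mul_left, hm]
  simp only [add_mul, mul_add, one_mul, mul_one, smul_mul_assoc, smul_add]
  abel

end Horner

section OuterConv

variable {K ι : Type*} [CommRing K]

def outerConv (q p : ℕ → ι → K) (l : ℕ) : Matrix ι ι K :=
  ∑ j ∈ range (l + 1), vecMulVec (q j) (p (l - j))

lemma outerConv_add_left (q q' p : ℕ → ι → K) :
    outerConv (q + q') p = outerConv q p + outerConv q' p := by
  ext1 l
  simp only [outerConv, Pi.add_apply, add_vecMulVec, sum_add_distrib]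

lemma outerConv_delay_left (q p : ℕ → ι → K) :
    outerConv (delay q) p = delay (outerConv q p) := by
  ext1 l
  cases l with
  | zero => simp [outerConv, delay]
  | succ l => simp [outerConv, delay, sum_range_succ' _ (l + 1)]

lemma outerConv_mulVec_left [Fintype ι] (V : Matrix ι ι K) (q p : ℕ → ι → K) :
    outerConv (fun i => V *ᵥ q i) p = fun l => V * outerConv q p l := by
  ext1 l
  simp only [outerConv, mul_sum, mul_vecMulVec]

lemma outerConv_congr_right {q p p' : ℕ → ι → K} {m : ℕ} (h : ∀ i < m, p i = p' i) :
    ∀ l < m, outerConv q p l = outerConv q p' l := fun l hl =>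
  sum_congr rfl fun j _ => by rw [h _ (by omega)]

lemma outerConv_update_self (q p : ℕ → ι → K) (m : ℕ) (x : ι → K) :
    outerConv q (Function.update p m x) m = outerConv q p m + vecMulVec (q 0) (x - p m) := by
  simp only [outerConv, sum_range_succ', Nat.sub_zero, Function.update_self, vecMulVec_sub]
  rw [sum_congr rfl fun j hj => by rw [Function.update_of_ne (by grind)]]
  abel

end OuterConv

lemma prod_reverse_ofFn_succ {A : Type*} [Monoid A] {m : ℕ} (f : ℕ → A) :
    (List.ofFn fun j : Fin (m + 1) => f j).reverse.prod =
      f m * (List.ofFn fun j : Fin m => f j).reverse.prod := by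
  rw [List.ofFn_succ', List.concat_eq_append, List.reverse_append, List.reverse_singleton,
    List.prod_append, List.prod_singleton]
  simp

variable {K ι : Type*} [Field K] [Fintype ι]

lemma exists_vecMul_outerConv_eq (q p : ℕ → ι → K) (m : ℕ) (w : ι → K) (hq : w ⬝ᵥ q 0 ≠ 0) :
    ∃ P : ℕ → ι → K, (∀ i < m, P i = p i) ∧ w ᵥ* outerConv q P m = w := by
  refine ⟨Function.update p m (p m + (w ⬝ᵥ q 0)⁻¹ • (w - w ᵥ* outerConv q p m)),
    fun i hi => Function.update_of_ne hi.ne _ _, ?_⟩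
  rw [outerConv_update_self, vecMul_add, vecMul_vecMulVec, add_sub_cancel_left, smul_smul,
    mul_inv_cancel₀ hq, one_smul, add_sub_cancel]

theorem exists_prod_eq_one_add_hornerSum [DecidableEq ι] (v w : ℕ → ι → K) {m : ℕ} (hm : 1 ≤ m)
    (helem : ∀ j, j + 1 < m → w (j + 1) ⬝ᵥ v j ≠ 0) :
    ∃ q p : ℕ → ι → K, (∃ c : K, c ≠ 0 ∧ q 0 = c • v (m - 1)) ∧ ∀ z : K,
      (List.ofFn fun j : Fin m => 1 + z • vecMulVec (v j) (w j)).reverse.prod =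
        1 + hornerSum (outerConv q p) m z := by
  induction m, hm using Nat.le_induction with
  | base =>
    refine ⟨fun i => if i = 0 then v 0 else 0, fun i => if i = 0 then w 0 else 0,
      ⟨1, one_ne_zero, by simp⟩, fun z => ?_⟩
    simp [hornerSum_succ, outerConv]
  | succ m hm ih =>
    obtain ⟨q, p, ⟨c, hc, hq0⟩, hprod⟩ := ih fun j hj => helem j (by omega)
    have hd : w m ⬝ᵥ q 0 ≠ 0 := by
      rw [hq0, dotProduct_smul, smul_eq_mul]
      refine mul_ne_zero hc ?_
      simpa [Nat.sub_add_cancel hm] using helem (m - 1) (by omega)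
    obtain ⟨P, hPp, hPm⟩ := exists_vecMul_outerConv_eq q p m (w m) hd
    set V := vecMulVec (v m) (w m)
    refine ⟨delay q + fun i => V *ᵥ q i, P, ⟨w m ⬝ᵥ q 0, hd, ?_⟩, fun z => ?_⟩
    · simp [delay, V, vecMulVec_mulVec]
    · have hVm : V * outerConv q P m = V := by rw [vecMulVec_mul, hPm]
      rw [prod_reverse_ofFn_succ (fun j => 1 + z • vecMulVec (v j) (w j)), hprod,
        hornerSum_congr (outerConv_congr_right fun i hi => (hPp i hi).symm),
        one_add_smul_mul_one_add_hornerSum V _ hVm, outerConv_add_left, outerConv_delay_left,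
        outerConv_mulVec_left]

end SolitonMatrix

open SolitonMatrix in
/-- Indices start at `0`: `v j`, `w j`, `q j`, `p j` stand for `v_{j+1}`, `w_{j+1}`, `q̄_{j+1}`,
`p̄_{j+1}`. -/
theorem soliton_matrix_form_general (N n : ℕ) (hn : 1 ≤ n)
    (kb : ℂ)
    (v w : ℕ → Fin N → ℂ)
    (helem : ∀ j, j + 1 < n → ∑ a, w (j + 1) a * v j a ≠ 0)
    (Γ : ℂ → Matrix (Fin N) (Fin N) ℂ)
    (hΓ : ∀ k, Γ k = (List.ofFn (fun j : Fin n =>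
      (1 : Matrix (Fin N) (Fin N) ℂ) +
        (k - kb)⁻¹ • Matrix.vecMulVec (v j) (w j))).reverse.prod) :
    ∃ q p : ℕ → Fin N → ℂ,
      ∀ k : ℂ, k ≠ kb →
        Γ k = 1 + ∑ l ∈ Finset.range n, ∑ j ∈ Finset.range (l + 1),
          ((k - kb) ^ (n - l))⁻¹ • Matrix.vecMulVec (q j) (p (l - j)) := by
  obtain ⟨q, p, -, hprod⟩ := exists_prod_eq_one_add_hornerSum v w hn helem
  refine ⟨q, p, fun k _ => ?_⟩
  rw [hΓ, hprod, hornerSum_eq_sum]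
  simp only [outerConv, smul_sum, inv_pow]

/-- Lemma 3, form of `Γ`: For an elementary higher-order zero, the
soliton matrix `Γ(k) = χ_n(k)···χ_1(k)` (with `χ_j(k) = I + (k−k̄₁)⁻¹ v_j w_jᵀ`,
normalization `⟨w_j|v_j⟩ = k̄₁−k₁` and elementarity `⟨w_{j+1}|v_j⟩ ≠ 0`) admits the
representation `Γ(k) = I + Σ_{l=1}^n Σ_{j=1}^l (k−k̄₁)^{−(n+1−l)} q̄_j p̄_{l+1−j}ᵀ`.
(Indices are shifted to start at 0: `v 0,…,v (n−1)` stand for `v_1,…,v_n`.) -/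
theorem soliton_matrix_form (N n : ℕ) (hN : 1 ≤ N) (hn : 1 ≤ n)
    (k₁ kb : ℂ) (hk : k₁ ≠ kb)
    (v w : ℕ → Fin N → ℂ)
    (hnorm : ∀ j < n, ∑ a, w j a * v j a = kb - k₁)
    (helem : ∀ j, j + 1 < n → ∑ a, w (j + 1) a * v j a ≠ 0)
    (Γ : ℂ → Matrix (Fin N) (Fin N) ℂ)
    (hΓ : ∀ k, Γ k = (List.ofFn (fun j : Fin n =>
      (1 : Matrix (Fin N) (Fin N) ℂ) +
        (k - kb)⁻¹ • Matrix.vecMulVec (v j) (w j))).reverse.prod) :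
    ∃ q p : ℕ → Fin N → ℂ,
      ∀ k : ℂ, k ≠ kb →
        Γ k = 1 + ∑ l ∈ Finset.range n, ∑ j ∈ Finset.range (l + 1),
          ((k - kb) ^ (n - l))⁻¹ • Matrix.vecMulVec (q j) (p (l - j)) :=
  soliton_matrix_form_general N n hn kb v w helem Γ hΓ
end

section
/- The coefficient of the highest-order pole of Γ(k) = χ_n(k)···χ_1(k) at k = k̄₁ is the rank-one matrix (Π_{j=1}^{n−1} ⟨w_{j+1}|v_j⟩) · v_n w_1^T; precisely, the limit as k → k̄₁ of (k−k̄₁)^n · Γ(k) exists and equals (Π_{j=1}^{n−1} ⟨w_{j+1}|v_j⟩) · v_n w_1^T. -/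
open scoped BigOperators Matrix
open Matrix

/-!
Clearing denominators, `(k - k̄₁)ⁿ Γ(k) = ∏ ((k - k̄₁) • 1 + v_j w_jᵀ)` for `k ≠ k̄₁`. The right-hand
side is a polynomial in `k`, hence continuous, so the limit is its value at `k̄₁`: the ordered product
of the rank-one matrices `v_j w_jᵀ`, which telescopes via `(v w₁ᵀ)(v' w₂ᵀ) = ⟨w₁|v'⟩ v w₂ᵀ`.
-/

theorem List.pow_length_smul_prod_one_add_inv_smul {K A : Type*} [Field K] [Ring A] [Algebra K A]
    {c : K} (hc : c ≠ 0) (l : List A) :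
    c ^ l.length • (l.map fun M => 1 + c⁻¹ • M).prod = (l.map fun M => c • 1 + M).prod := by
  rw [← List.length_map (f := fun M => 1 + c⁻¹ • M), List.smul_prod, List.map_map]
  congr 2
  ext M
  simp [smul_add, smul_smul, mul_inv_cancel₀ hc]

theorem Matrix.prod_reverse_ofFn_vecMulVec {m R : Type*} [Fintype m] [DecidableEq m]
    [CommSemiring R] (v w : ℕ → m → R) (n : ℕ) :
    (List.ofFn fun j : Fin (n + 1) => vecMulVec (v j) (w j)).reverse.prod =
      (∏ j ∈ Finset.range n, w (j + 1) ⬝ᵥ v j) • vecMulVec (v n) (w 0) := by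
  induction n with
  | zero => simp
  | succ n ih =>
    rw [List.ofFn_succ', List.concat_eq_append, List.reverse_concat', List.prod_cons]
    simp only [Fin.val_castSucc, Fin.val_last]
    rw [ih, mul_smul_comm, vecMulVec_mul_vecMulVec, vecMulVec_smul, smul_smul,
      Finset.prod_range_succ, mul_comm]

theorem highest_pole_coefficient_general (N n : ℕ) (hn : 1 ≤ n)
    (kb : ℂ)
    (v w : ℕ → Fin N → ℂ)
    (Γ : ℂ → Matrix (Fin N) (Fin N) ℂ)
    (hΓ : ∀ k, Γ k = (List.ofFn (fun j : Fin n =>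
      (1 : Matrix (Fin N) (Fin N) ℂ) +
        (k - kb)⁻¹ • Matrix.vecMulVec (v j) (w j))).reverse.prod) :
    Filter.Tendsto (fun k : ℂ => (k - kb) ^ n • Γ k) (nhdsWithin kb {kb}ᶜ)
      (nhds ((∏ j ∈ Finset.range (n - 1), ∑ a, w (j + 1) a * v j a) •
        Matrix.vecMulVec (v (n - 1)) (w 0))) := by
  obtain ⟨m, rfl⟩ := Nat.exists_eq_add_of_le' hn
  set L := (List.ofFn fun j : Fin (m + 1) => vecMulVec (v j) (w j)).reverse
  set F : ℂ → Matrix (Fin N) (Fin N) ℂ := fun k => (L.map fun M => (k - kb) • 1 + M).prod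
  have hF : Continuous F := continuous_list_prod L fun M _ => by fun_prop
  have hF_kb : F kb = (∏ j ∈ Finset.range m, w (j + 1) ⬝ᵥ v j) • vecMulVec (v m) (w 0) := by
    simp only [F, sub_self, zero_smul, zero_add, List.map_id']
    exact Matrix.prod_reverse_ofFn_vecMulVec v w m
  have hF_eq : ∀ k ≠ kb, (k - kb) ^ (m + 1) • Γ k = F k := fun k hk => by
    have hlen : L.length = m + 1 := by simp [L]
    have hΓL : Γ k = (L.map fun M => 1 + (k - kb)⁻¹ • M).prod := by
      rw [hΓ, List.map_reverse, List.map_ofFn]; rfl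
    rw [hΓL, ← hlen, List.pow_length_smul_prod_one_add_inv_smul (sub_ne_zero.mpr hk)]
  rw [Nat.add_sub_cancel]
  refine (hF_kb ▸ hF.tendsto kb).mono_left nhdsWithin_le_nhds |>.congr' ?_
  filter_upwards [self_mem_nhdsWithin] with k hk using (hF_eq k hk).symm

/-- The coefficient of the highest-order pole of
`Γ(k) = χ_n(k)···χ_1(k)` at `k = k̄₁` is
`(Π_{j=1}^{n−1} ⟨w_{j+1}|v_j⟩) · v_n w_1ᵀ`: the limit of `(k−k̄₁)^n Γ(k)` as
`k → k̄₁` exists and equals this rank-one matrix. (Indices shifted to start at 0.) -/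
theorem highest_pole_coefficient (N n : ℕ) (hN : 1 ≤ N) (hn : 1 ≤ n)
    (kb : ℂ)
    (v w : ℕ → Fin N → ℂ)
    (Γ : ℂ → Matrix (Fin N) (Fin N) ℂ)
    (hΓ : ∀ k, Γ k = (List.ofFn (fun j : Fin n =>
      (1 : Matrix (Fin N) (Fin N) ℂ) +
        (k - kb)⁻¹ • Matrix.vecMulVec (v j) (w j))).reverse.prod) :
    Filter.Tendsto (fun k : ℂ => (k - kb) ^ n • Γ k) (nhdsWithin kb {kb}ᶜ)
      (nhds ((∏ j ∈ Finset.range (n - 1), ∑ a, w (j + 1) a * v j a) •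
        Matrix.vecMulVec (v (n - 1)) (w 0))) :=
  highest_pole_coefficient_general N n hn kb v w Γ hΓ
end

section
/- Suppose there exists a matrix-valued function H : ℂ → M_N(ℂ) with entries analytic at k₁ such that Γ(k)·R(k) = H(k) for all k ≠ k₁ in some punctured neighborhood of k₁, where R(k) = I + Σ_{l=1}^n Σ_{j=1}^l (k−k₁)^{-(n+1−l)} · p_{l+1−j} q_j^T. If q_1 ≠ 0, then for every m = 1,…,n: Γ(k₁)·p_m + (1/1!)·Γ'(k₁)·p_{m−1} + (1/2!)·Γ''(k₁)·p_{m−2} + … + (1/(m−1)!)·Γ^{(m−1)}(k₁)·p_1 = 0, where Γ^{(i)} denotes the i-th entrywise complex derivative. -/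
/-!
Multiplying by `(k - k₁) ^ n` clears the poles: with `A l = ∑_{j ≤ l} p (l + 1 - j) q jᵀ`,
`(k - k₁) ^ n Γ k + ∑_{l ≤ n} (k - k₁) ^ (l - 1) Γ k A l = (k - k₁) ^ n H k` is an identity
between functions analytic at `k₁`. Its Taylor coefficient of order `m - 1 < n` reads
`∑_{l ≤ m} Γᵢ A l = 0` with `i = m - l` and `Γᵢ = Γ⁽ⁱ⁾(k₁) / i!`. Regrouped by `j`, this is
`∑_{j ≤ m} w (m + 1 - j) q jᵀ = 0` for `w m = ∑_{i < m} Γᵢ p (m - i)`: a triangular system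
whose diagonal `w ↦ w q 1ᵀ` is injective since `q 1 ≠ 0`, so every `w m` vanishes by induction.
-/

open Finset Filter Topology Matrix
open scoped Nat

section TaylorCoeff

variable {𝕜 : Type*} [NontriviallyNormedField 𝕜] {f g : 𝕜 → 𝕜} {x : 𝕜} {i : ℕ}

noncomputable def taylorCoeff (f : 𝕜 → 𝕜) (x : 𝕜) (i : ℕ) : 𝕜 :=
  (i ! : 𝕜)⁻¹ * iteratedDeriv i f x

theorem taylorCoeff_fun_add (hf : ContDiffAt 𝕜 i f x) (hg : ContDiffAt 𝕜 i g x) :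
    taylorCoeff (fun k => f k + g k) x i = taylorCoeff f x i + taylorCoeff g x i := by
  simp only [taylorCoeff, iteratedDeriv_fun_add hf hg, mul_add]

theorem taylorCoeff_fun_sum {ι : Type*} {s : Finset ι} {f : ι → 𝕜 → 𝕜}
    (hf : ∀ l ∈ s, ContDiffAt 𝕜 i (f l) x) :
    taylorCoeff (fun k => ∑ l ∈ s, f l k) x i = ∑ l ∈ s, taylorCoeff (f l) x i := by
  simp only [taylorCoeff, iteratedDeriv_fun_sum hf, mul_sum]

theorem taylorCoeff_mul_const (f : 𝕜 → 𝕜) (c : 𝕜) :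
    taylorCoeff (fun k => f k * c) x i = taylorCoeff f x i * c := by
  simp only [taylorCoeff, iteratedDeriv_mul_const_field, mul_assoc]

theorem taylorCoeff_eq_of_eventuallyEq_nhdsNE (hf : ContinuousAt f x) (hg : ContinuousAt g x)
    (h : f =ᶠ[𝓝[≠] x] g) (i : ℕ) : taylorCoeff f x i = taylorCoeff g x i := by
  rw [taylorCoeff, taylorCoeff,
    ((hf.eventuallyEq_nhds_iff_eventuallyEq_nhdsNE hg).mp h).iteratedDeriv_eq]

theorem iteratedDeriv_sub_const_pow_self (t j : ℕ) :
    iteratedDeriv t (fun k => (k - x) ^ j) x = if t = j then (j ! : 𝕜) else 0 := by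
  rw [iteratedDeriv_comp_sub_const (f := fun k => k ^ j)]
  simp only [sub_self, iteratedDeriv_fun_pow_zero, Nat.cast_ite, Nat.cast_zero]

variable [CharZero 𝕜]

theorem taylorCoeff_sub_pow_mul (j : ℕ) (hg : ContDiffAt 𝕜 i g x) :
    taylorCoeff (fun k => (k - x) ^ j * g k) x i =
      if j ≤ i then taylorCoeff g x (i - j) else 0 := by
  have hpow : ContDiffAt 𝕜 i (fun k => (k - x) ^ j) x := by fun_prop
  simp only [taylorCoeff, iteratedDeriv_fun_mul hpow hg, iteratedDeriv_sub_const_pow_self,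
    mul_ite, ite_mul, mul_zero, zero_mul, sum_ite_eq', mem_range, Nat.lt_succ_iff]
  split_ifs with hji
  · have : (j ! : 𝕜) ≠ 0 := Nat.cast_ne_zero.mpr (Nat.factorial_ne_zero _)
    have : ((i - j) ! : 𝕜) ≠ 0 := Nat.cast_ne_zero.mpr (Nat.factorial_ne_zero _)
    have : (i.choose j : 𝕜) ≠ 0 := Nat.cast_ne_zero.mpr (Nat.choose_pos hji).ne'
    rw [← Nat.choose_mul_factorial_mul_factorial hji]
    push_cast
    field_simp
  · rfl

theorem taylorCoeff_sum_sub_pow_mul {f : ℕ → 𝕜 → 𝕜} {n m : ℕ}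
    (hf : ∀ l, ContDiffAt 𝕜 (m - 1) (f l) x) (hm : m ∈ Icc 1 n) :
    taylorCoeff (fun k => ∑ l ∈ Icc 1 n, (k - x) ^ (l - 1) * f l k) x (m - 1) =
      ∑ l ∈ Icc 1 m, taylorCoeff (f l) x (m - l) := by
  rw [taylorCoeff_fun_sum fun l _ => by fun_prop]
  simp only [taylorCoeff_sub_pow_mul _ (hf _), ← sum_filter]
  have hfilter : {l ∈ Icc 1 n | l - 1 ≤ m - 1} = Icc 1 m := by
    ext l
    simp only [mem_filter, mem_Icc] at hm ⊢
    omega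
  exact sum_congr hfilter fun l hl => by rw [Nat.sub_sub_sub_cancel_right (mem_Icc.mp hl).1]

end TaylorCoeff

section TaylorCoeffMatrix

variable {𝕜 : Type*} [NontriviallyNormedField 𝕜] {ι κ : Type*}

noncomputable def taylorCoeffMatrix (Γ : 𝕜 → Matrix ι κ 𝕜) (x : 𝕜) (i : ℕ) : Matrix ι κ 𝕜 :=
  Matrix.of fun a b => taylorCoeff (fun k => Γ k a b) x i

theorem taylorCoeffMatrix_eq_inv_factorial_smul (Γ : 𝕜 → Matrix ι κ 𝕜) (x : 𝕜) (i : ℕ) :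
    taylorCoeffMatrix Γ x i = (i ! : 𝕜)⁻¹ • Matrix.of fun a b => iteratedDeriv i (Γ · a b) x :=
  rfl

variable [Fintype κ]

theorem taylorCoeff_mul_apply {Γ : 𝕜 → Matrix ι κ 𝕜} {x : 𝕜} {i : ℕ}
    (hΓ : ∀ a b, ContDiffAt 𝕜 i (fun k => Γ k a b) x) {ν : Type*} (A : Matrix κ ν 𝕜)
    (a : ι) (b : ν) :
    taylorCoeff (fun k => (Γ k * A) a b) x i = (taylorCoeffMatrix Γ x i * A) a b := by
  simp only [mul_apply, taylorCoeff_fun_sum fun c _ => (hΓ a c).mul contDiffAt_const,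
    taylorCoeff_mul_const, taylorCoeffMatrix, of_apply]

theorem sum_taylorCoeffMatrix_mul_eq_zero [CharZero 𝕜] [CompleteSpace 𝕜]
    {Γ H : 𝕜 → Matrix ι κ 𝕜} {x : 𝕜}
    (hΓ : ∀ a b, AnalyticAt 𝕜 (fun k => Γ k a b) x)
    (hH : ∀ a b, AnalyticAt 𝕜 (fun k => H k a b) x) (A : ℕ → Matrix κ κ 𝕜) {n : ℕ}
    (h : ∀ᶠ k in 𝓝[≠] x,
      (k - x) ^ n • Γ k + ∑ l ∈ Icc 1 n, (k - x) ^ (l - 1) • (Γ k * A l) = (k - x) ^ n • H k)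
    {m : ℕ} (hm : m ∈ Icc 1 n) :
    ∑ l ∈ Icc 1 m, taylorCoeffMatrix Γ x (m - l) * A l = 0 := by
  ext a b
  have hΓab := hΓ a b
  have hHab := hH a b
  have hΓA (l : ℕ) : AnalyticAt 𝕜 (fun k => (Γ k * A l) a b) x := by
    simp only [mul_apply]
    exact Finset.analyticAt_fun_sum _ fun c _ => (hΓ a c).mul analyticAt_const
  have hF₁ : AnalyticAt 𝕜 (fun k => (k - x) ^ n * Γ k a b) x := by fun_prop
  have hF₂ : AnalyticAt 𝕜 (fun k => ∑ l ∈ Icc 1 n, (k - x) ^ (l - 1) * (Γ k * A l) a b) x :=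
    Finset.analyticAt_fun_sum _ fun l _ => by have := hΓA l; fun_prop
  have hG : AnalyticAt 𝕜 (fun k => (k - x) ^ n * H k a b) x := by fun_prop
  have hentry : ∀ᶠ k in 𝓝[≠] x, (k - x) ^ n * Γ k a b +
      ∑ l ∈ Icc 1 n, (k - x) ^ (l - 1) * (Γ k * A l) a b = (k - x) ^ n * H k a b := by
    filter_upwards [h] with k hk
    simpa [Matrix.sum_apply] using congr($hk a b)
  have hmn : ¬ n ≤ m - 1 := by
    simp only [mem_Icc] at hm
    omega
  calc (∑ l ∈ Icc 1 m, taylorCoeffMatrix Γ x (m - l) * A l) a b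
      = taylorCoeff (fun k => (k - x) ^ n * Γ k a b +
          ∑ l ∈ Icc 1 n, (k - x) ^ (l - 1) * (Γ k * A l) a b) x (m - 1) := by
        rw [taylorCoeff_fun_add hF₁.contDiffAt hF₂.contDiffAt,
          taylorCoeff_sub_pow_mul _ hΓab.contDiffAt, if_neg hmn, zero_add,
          taylorCoeff_sum_sub_pow_mul (fun l => (hΓA l).contDiffAt) hm, Matrix.sum_apply]
        exact sum_congr rfl fun l _ =>
          (taylorCoeff_mul_apply (fun a b => (hΓ a b).contDiffAt) _ a b).symm
    _ = taylorCoeff (fun k => (k - x) ^ n * H k a b) x (m - 1) :=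
        taylorCoeff_eq_of_eventuallyEq_nhdsNE (hF₁.add hF₂).continuousAt hG.continuousAt hentry _
    _ = 0 := by rw [taylorCoeff_sub_pow_mul _ hHab.contDiffAt, if_neg hmn]

end TaylorCoeffMatrix

theorem pow_smul_sum_inv_pow_smul {𝕜 M : Type*} [Field 𝕜] [AddCommMonoid M] [Module 𝕜 M]
    {c : 𝕜} (hc : c ≠ 0) (n : ℕ) (B : ℕ → M) :
    c ^ n • ∑ l ∈ Icc 1 n, (c ^ (n + 1 - l))⁻¹ • B l = ∑ l ∈ Icc 1 n, c ^ (l - 1) • B l := by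
  rw [smul_sum]
  refine sum_congr rfl fun l hl => ?_
  obtain ⟨h1l, hln⟩ := mem_Icc.mp hl
  rw [smul_smul, ← pow_sub₀ c hc (by omega), show n - (n + 1 - l) = l - 1 by omega]

theorem pow_smul_mul_one_add_sum {𝕜 M : Type*} [Field 𝕜] [Ring M] [Algebra 𝕜 M]
    {c : 𝕜} (hc : c ≠ 0) (n : ℕ) (G : M) (B : ℕ → M) :
    c ^ n • (G * (1 + ∑ l ∈ Icc 1 n, (c ^ (n + 1 - l))⁻¹ • B l)) =
      c ^ n • G + ∑ l ∈ Icc 1 n, c ^ (l - 1) • (G * B l) := by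
  rw [← mul_smul_comm, smul_add, pow_smul_sum_inv_pow_smul hc, mul_add, mul_smul_comm, mul_one,
    mul_sum]
  simp only [mul_smul_comm]

section VecMulVec

variable {R : Type*} [CommSemiring R] {ι κ ν : Type*}

theorem Matrix.sum_vecMulVec {α : Type*} (s : Finset α) (u : α → ι → R) (v : ν → R) :
    vecMulVec (∑ i ∈ s, u i) v = ∑ i ∈ s, vecMulVec (u i) v := by
  ext a b
  simp only [vecMulVec_apply, Finset.sum_apply, Matrix.sum_apply, sum_mul]

theorem sum_mul_sum_vecMulVec [Fintype κ] (C : ℕ → Matrix ι κ R) (p : ℕ → κ → R)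
    (q : ℕ → ν → R) (m : ℕ) :
    ∑ l ∈ Icc 1 m, C (m - l) * ∑ j ∈ Icc 1 l, vecMulVec (p (l + 1 - j)) (q j) =
      ∑ j ∈ Icc 1 m, vecMulVec (∑ i ∈ range (m + 1 - j), C i *ᵥ p (m + 1 - j - i)) (q j) := by
  simp only [Matrix.mul_sum, mul_vecMulVec, Matrix.sum_vecMulVec]
  rw [sum_sigma', sum_sigma']
  refine sum_nbij' (fun x => ⟨x.2, m - x.1⟩) (fun x => ⟨m - x.2, x.1⟩) ?_ ?_ ?_ ?_ ?_ <;>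
    simp only [mem_sigma, mem_Icc, mem_range, Sigma.forall, Sigma.mk.injEq, heq_eq_eq,
      true_and] <;> intro l j hlj
  · lia
  · lia
  · lia
  · lia
  · rw [show m + 1 - j - (m - l) = l + 1 - j by lia]

theorem eq_zero_of_sum_vecMulVec_eq_zero [NoZeroDivisors R] {w : ℕ → ι → R} {q : ℕ → ν → R}
    (hq : q 1 ≠ 0) {n : ℕ}
    (h : ∀ m ∈ Icc 1 n, ∑ j ∈ Icc 1 m, vecMulVec (w (m + 1 - j)) (q j) = 0) :
    ∀ m ∈ Icc 1 n, w m = 0 := by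
  intro m
  induction m using Nat.strong_induction_on with
  | _ m ih =>
    intro hm
    obtain ⟨h1m, hmn⟩ := mem_Icc.mp hm
    have hlower : ∑ j ∈ Ioc 1 m, vecMulVec (w (m + 1 - j)) (q j) = 0 :=
      sum_eq_zero fun j hj => by
        obtain ⟨h1j, hjm⟩ := mem_Ioc.mp hj
        rw [ih (m + 1 - j) (by omega) (mem_Icc.mpr ⟨by omega, by omega⟩), zero_vecMulVec]
    have hdiag := h m hm
    rw [← add_sum_Ioc_eq_sum_Icc h1m, hlower, add_zero, Nat.add_sub_cancel] at hdiag
    obtain ⟨b, hb⟩ := Function.ne_iff.mp hq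
    funext a
    exact (mul_eq_zero.mp congr($hdiag a b)).resolve_right hb

end VecMulVec

theorem stacked_kernel_equations_general (N n : ℕ)
    (k₁ : ℂ)
    (Γ : ℂ → Matrix (Fin N) (Fin N) ℂ)
    (hΓ : ∀ a b, AnalyticAt ℂ (fun k => Γ k a b) k₁)
    (p q : ℕ → Fin N → ℂ)
    (H : ℂ → Matrix (Fin N) (Fin N) ℂ)
    (hH : ∀ a b, AnalyticAt ℂ (fun k => H k a b) k₁)
    (hGR : ∀ᶠ k in nhdsWithin k₁ {k₁}ᶜ,
      Γ k * (1 + ∑ l ∈ Finset.Icc 1 n, ∑ j ∈ Finset.Icc 1 l,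
        ((k - k₁) ^ (n + 1 - l))⁻¹ • Matrix.vecMulVec (p (l + 1 - j)) (q j)) = H k)
    (hq : q 1 ≠ 0) :
    ∀ m ∈ Finset.Icc 1 n,
      ∑ i ∈ Finset.range m, ((Nat.factorial i : ℂ))⁻¹ •
        ((Matrix.of fun a b => iteratedDeriv i (fun k => Γ k a b) k₁) *ᵥ p (m - i))
      = 0 := by
  set A : ℕ → Matrix (Fin N) (Fin N) ℂ := fun l => ∑ j ∈ Icc 1 l, vecMulVec (p (l + 1 - j)) (q j)
  have hcleared : ∀ᶠ k in 𝓝[≠] k₁, (k - k₁) ^ n • Γ k +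
      ∑ l ∈ Icc 1 n, (k - k₁) ^ (l - 1) • (Γ k * A l) = (k - k₁) ^ n • H k := by
    filter_upwards [hGR, self_mem_nhdsWithin] with k hk hne
    simp only [← hk, ← smul_sum]
    exact (pow_smul_mul_one_add_sum (sub_ne_zero.mpr hne) n (Γ k) A).symm
  have hcoeff : ∀ m ∈ Icc 1 n, ∑ j ∈ Icc 1 m,
      vecMulVec (∑ i ∈ range (m + 1 - j), taylorCoeffMatrix Γ k₁ i *ᵥ p (m + 1 - j - i)) (q j)
        = 0 := fun m hm => by
    rw [← sum_mul_sum_vecMulVec (taylorCoeffMatrix Γ k₁) p q m]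
    exact sum_taylorCoeffMatrix_mul_eq_zero hΓ hH A hcleared hm
  intro m hm
  simpa only [taylorCoeffMatrix_eq_inv_factorial_smul, smul_mulVec] using
    eq_zero_of_sum_vecMulVec_eq_zero
      (w := fun m => ∑ i ∈ range m, taylorCoeffMatrix Γ k₁ i *ᵥ p (m - i)) hq hcoeff m hm

/-- If `Γ(k)·R(k)` extends analytically across `k₁`, where
`R(k) = I + Σ_{l=1}^n Σ_{j=1}^l (k−k₁)^{−(n+1−l)} p_{l+1−j} q_jᵀ`, and `q_1 ≠ 0`,
then for every `m = 1,…,n`: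
`Σ_{i=0}^{m−1} (1/i!) Γ^{(i)}(k₁) p_{m−i} = 0`. -/
theorem stacked_kernel_equations (N n : ℕ) (hN : 1 ≤ N) (hn : 1 ≤ n)
    (k₁ : ℂ)
    (Γ : ℂ → Matrix (Fin N) (Fin N) ℂ)
    (hΓ : ∀ a b, AnalyticAt ℂ (fun k => Γ k a b) k₁)
    (p q : ℕ → Fin N → ℂ)
    (H : ℂ → Matrix (Fin N) (Fin N) ℂ)
    (hH : ∀ a b, AnalyticAt ℂ (fun k => H k a b) k₁)
    (hGR : ∀ᶠ k in nhdsWithin k₁ {k₁}ᶜ,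
      Γ k * (1 + ∑ l ∈ Finset.Icc 1 n, ∑ j ∈ Finset.Icc 1 l,
        ((k - k₁) ^ (n + 1 - l))⁻¹ • Matrix.vecMulVec (p (l + 1 - j)) (q j)) = H k)
    (hq : q 1 ≠ 0) :
    ∀ m ∈ Finset.Icc 1 n,
      ∑ i ∈ Finset.range m, ((Nat.factorial i : ℂ))⁻¹ •
        ((Matrix.of fun a b => iteratedDeriv i (fun k => Γ k a b) k₁) *ᵥ p (m - i))
      = 0 :=
  stacked_kernel_equations_general N n k₁ Γ hΓ p q H hH hGR hq
end

section
/- If Φ(0)·v₀ = 0, then for every x ∈ ℝ one has Φ(x)·(exp(−xΛ)·v₀) = 0; that is, the kernel vector evolves as v(x) = exp(−xΛ)·v₀, remaining in the kernel of Φ(x) for all x. -/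
open scoped Matrix

/-!
Put `w(x) = Φ(x) exp(-xΛ) v₀`. Since `exp(-xΛ)' = -Λ exp(-xΛ)`, the term `Φ Λ` in `Φ'` cancels and
`w' = U w`, a linear ODE with continuous coefficients and `w(0) = 0`. On each compact interval `U`
is bounded, so the right-hand side is Lipschitz in `w` and Grönwall uniqueness forces `w ≡ 0`.
-/

open Set in
theorem eq_zero_of_hasDerivAt_clm_apply_of_eq_zero {E : Type*} [NormedAddCommGroup E]
    [NormedSpace ℝ E] {A : ℝ → E →L[ℝ] E} (hA : Continuous A) {w : ℝ → E}
    (hw : ∀ t, HasDerivAt w (A t (w t)) t) {t₀ : ℝ} (hw₀ : w t₀ = 0) (t : ℝ) : w t = 0 := by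
  set a := min t t₀ - 1
  set b := max t t₀ + 1
  obtain ⟨C, hC⟩ :=
    (isCompact_Icc (a := a) (b := b)).exists_bound_of_continuousOn hA.continuousOn
  have hlip : ∀ s ∈ Ioo a b, LipschitzOnWith C.toNNReal (A s) univ := by
    intro s hs
    have hnorm : ‖A s‖₊ ≤ C.toNNReal := by
      rw [← norm_toNNReal]
      exact Real.toNNReal_mono (hC s (Ioo_subset_Icc_self hs))
    exact ((A s).lipschitz.weaken hnorm).lipschitzOnWith
  have hmem : ∀ {s}, s ∈ Icc (min t t₀) (max t t₀) → s ∈ Ioo a b := fun hs =>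
    ⟨by linarith [hs.1], by linarith [hs.2]⟩
  refine ODE_solution_unique_of_mem_Ioo hlip (hmem ⟨min_le_right _ _, le_max_right _ _⟩)
    (fun s _ => ⟨hw s, mem_univ _⟩) (g := 0) (fun s _ => ⟨?_, mem_univ _⟩) hw₀
    (hmem ⟨min_le_left _ _, le_max_left _ _⟩)
  simp

theorem Matrix.eq_zero_of_hasDerivAt_mulVec_of_eq_zero {ι 𝕜 : Type*} [Fintype ι] [RCLike 𝕜]
    {A : ℝ → Matrix ι ι 𝕜} (hA : Continuous A) {w : ℝ → ι → 𝕜}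
    (hw : ∀ t, HasDerivAt w (A t *ᵥ w t) t) {t₀ : ℝ} (hw₀ : w t₀ = 0) (t : ℝ) : w t = 0 :=
  eq_zero_of_hasDerivAt_clm_apply_of_eq_zero
    (A := fun s => LinearMap.toContinuousLinearMap ((A s).mulVecLin.restrictScalars ℝ))
    (continuous_clm_apply.2 fun _ => hA.matrix_mulVec continuous_const) hw hw₀ t

theorem HasDerivAt.matrix_mulVec {m n 𝔸 : Type*} [Fintype n] [NormedCommRing 𝔸]
    [NormedAlgebra ℝ 𝔸] {M : ℝ → Matrix m n 𝔸} {M' : Matrix m n 𝔸} {u : ℝ → n → 𝔸}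
    {u' : n → 𝔸} {x : ℝ} (hM : ∀ i j, HasDerivAt (fun y => M y i j) (M' i j) x)
    (hu : HasDerivAt u u' x) :
    HasDerivAt (fun y => M y *ᵥ u y) (M' *ᵥ u x + M x *ᵥ u') x := by
  rw [hasDerivAt_pi] at hu ⊢
  intro i
  simpa [Matrix.mulVec, dotProduct, Finset.sum_add_distrib] using
    HasDerivAt.fun_sum fun j _ => (hM i j).mul (hu j)

theorem Matrix.hasDerivAt_exp_smul_apply {m 𝕜 : Type*} [Fintype m] [DecidableEq m] [RCLike 𝕜]
    (A : Matrix m m 𝕜) (t : ℝ) (i j : m) :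
    HasDerivAt (fun s : ℝ => NormedSpace.exp (s • A) i j)
      ((A * NormedSpace.exp (t • A)) i j) t := by
  let : NormedRing (Matrix m m 𝕜) := Matrix.linftyOpNormedRing
  let : NormedAlgebra ℝ (Matrix m m 𝕜) := Matrix.linftyOpNormedAlgebra
  exact ((Matrix.entryLinearMap ℝ 𝕜 i j).toContinuousLinearMap.hasFDerivAt.comp_hasDerivAt t
    (hasDerivAt_exp_smul_const' A t) :)

theorem kernel_vector_evolution_general (N : ℕ)
    (Λ : Matrix (Fin N) (Fin N) ℂ)
    (U : ℝ → Matrix (Fin N) (Fin N) ℂ)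
    (hU : ∀ a b, Continuous fun x => U x a b)
    (Φ : ℝ → Matrix (Fin N) (Fin N) ℂ)
    (hΦ : ∀ x : ℝ, ∀ a b, HasDerivAt (fun y => Φ y a b)
      ((Φ x * Λ + U x * Φ x) a b) x)
    (v₀ : Fin N → ℂ)
    (hv₀ : Φ 0 *ᵥ v₀ = 0) :
    ∀ x : ℝ, Φ x *ᵥ (NormedSpace.exp ((-(x : ℂ)) • Λ) *ᵥ v₀) = 0 := by
  have hE : ∀ y : ℝ, (-(y : ℂ)) • Λ = y • -Λ := fun y => by
    rw [smul_neg, ← neg_smul, ← Complex.ofReal_neg, Complex.coe_smul]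
  simp only [hE]
  have hw : ∀ t : ℝ, HasDerivAt (fun y : ℝ => Φ y *ᵥ (NormedSpace.exp (y • -Λ) *ᵥ v₀))
      (U t *ᵥ (Φ t *ᵥ (NormedSpace.exp (t • -Λ) *ᵥ v₀))) t := fun t => by
    have hEv := HasDerivAt.matrix_mulVec (Matrix.hasDerivAt_exp_smul_apply (-Λ) t)
      (hasDerivAt_const t v₀)
    convert HasDerivAt.matrix_mulVec (hΦ t) hEv using 1
    simp only [Matrix.mulVec_zero, add_zero, Matrix.mulVec_mulVec, ← Matrix.add_mulVec]
    congr 1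
    noncomm_ring
  refine Matrix.eq_zero_of_hasDerivAt_mulVec_of_eq_zero
    (continuous_pi fun a => continuous_pi fun b => hU a b) hw (t₀ := 0) ?_
  simp [hv₀]

/-- If `Φ` solves the linear spectral equation
`Φ'(x) = Φ(x)Λ + U(x)Φ(x)` and `Φ(0)v₀ = 0`, then
`Φ(x)·(exp(−xΛ)v₀) = 0` for all `x ∈ ℝ`. -/
theorem kernel_vector_evolution (N : ℕ) (hN : 1 ≤ N)
    (Λ : Matrix (Fin N) (Fin N) ℂ)
    (U : ℝ → Matrix (Fin N) (Fin N) ℂ)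
    (hU : ∀ a b, Continuous fun x => U x a b)
    (Φ : ℝ → Matrix (Fin N) (Fin N) ℂ)
    (hΦ : ∀ x : ℝ, ∀ a b, HasDerivAt (fun y => Φ y a b)
      ((Φ x * Λ + U x * Φ x) a b) x)
    (v₀ : Fin N → ℂ)
    (hv₀ : Φ 0 *ᵥ v₀ = 0) :
    ∀ x : ℝ, Φ x *ᵥ (NormedSpace.exp ((-(x : ℂ)) • Λ) *ᵥ v₀) = 0 :=
  kernel_vector_evolution_general N Λ U hU Φ hΦ v₀ hv₀
end

section
/- If ε ≠ 0, then v₁ ≠ v₂, v₁ ≠ v₃, v₃ ≠ v₂, and the inverse-scattering parameters are recovered from the physical parameters by a₁ − a₂ = ε²/((v₁ − v₂)(v₁ − v₃)) and a₂ − a₃ = ε²/((v₁ − v₂)(v₃ − v₂)). -/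
/-- If the coupling constant `ε` is nonzero then the three group
velocities are pairwise distinct and the inverse-scattering parameters are
recovered via `a₁ − a₂ = ε²/((v₁−v₂)(v₁−v₃))`, `a₂ − a₃ = ε²/((v₁−v₂)(v₃−v₂))`. -/
theorem inverse_scattering_parameters (a₁ a₂ a₃ b₁ b₂ b₃ : ℝ)
    (h12 : a₂ < a₁) (h23 : a₃ < a₂)
    (v₁ v₂ v₃ ε : ℝ)
    (hv₁ : v₁ = (b₂ - b₁) / (a₁ - a₂))
    (hv₂ : v₂ = (b₃ - b₂) / (a₂ - a₃))
    (hv₃ : v₃ = (b₃ - b₁) / (a₁ - a₃))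
    (hε : ε = (a₁ * b₂ - a₂ * b₁ + a₂ * b₃ - a₃ * b₂ + a₃ * b₁ - a₁ * b₃) /
      Real.sqrt ((a₁ - a₂) * (a₂ - a₃) * (a₁ - a₃)))
    (hε0 : ε ≠ 0) :
    v₁ ≠ v₂ ∧ v₁ ≠ v₃ ∧ v₃ ≠ v₂ ∧
      a₁ - a₂ = ε ^ 2 / ((v₁ - v₂) * (v₁ - v₃)) ∧
      a₂ - a₃ = ε ^ 2 / ((v₁ - v₂) * (v₃ - v₂)) := by
  set N : ℝ := a₁ * b₂ - a₂ * b₁ + a₂ * b₃ - a₃ * b₂ + a₃ * b₁ - a₁ * b₃ with hNdef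
  have hd1 : (0:ℝ) < a₁ - a₂ := by linarith
  have hd2 : (0:ℝ) < a₂ - a₃ := by linarith
  have hd3 : (0:ℝ) < a₁ - a₃ := by linarith
  have hP : (0:ℝ) < (a₁ - a₂) * (a₂ - a₃) * (a₁ - a₃) := by positivity
  have hN : N ≠ 0 := by
    intro h
    apply hε0
    rw [hε, h, zero_div]
  have e1 : v₁ - v₂ = N / ((a₁ - a₂) * (a₂ - a₃)) := by
    rw [hv₁, hv₂]; field_simp; ring
  have e2 : v₁ - v₃ = N / ((a₁ - a₂) * (a₁ - a₃)) := by
    rw [hv₁, hv₃]; field_simp; ring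
  have e3 : v₃ - v₂ = N / ((a₂ - a₃) * (a₁ - a₃)) := by
    rw [hv₂, hv₃]; field_simp; ring
  have hsq : ε ^ 2 = N ^ 2 / ((a₁ - a₂) * (a₂ - a₃) * (a₁ - a₃)) := by
    rw [hε, div_pow, Real.sq_sqrt hP.le]
  have h1 : v₁ - v₂ ≠ 0 := by rw [e1]; positivity
  have h2 : v₁ - v₃ ≠ 0 := by rw [e2]; positivity
  have h3 : v₃ - v₂ ≠ 0 := by rw [e3]; positivity
  refine ⟨sub_ne_zero.mp h1, sub_ne_zero.mp h2, sub_ne_zero.mp h3, ?_, ?_⟩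
  · rw [hsq, e1, e2]
    field_simp
  · rw [hsq, e1, e3]
    field_simp
end

section
/- The determinant of K̄ equals −Σ_{i=1}^3 Σ_{j=1}^3 ( |θ¹_i θ¹_j|² + (1/2)|θ²_i θ¹_j − θ¹_i θ²_j + (f_i − f_j)θ¹_i θ¹_j|² ) e^{f_i + f_j}; in particular, if at least one of θ¹_1, θ¹_2, θ¹_3 is nonzero, then det K̄ ≠ 0. -/
/-!
With weights `w j = exp (f j)` and `b = θ² + (f - 1) θ¹`, the matrix `K̄` has the shape
`[[-2iη A, -S], [conj S, B / (2iη)]]` with `A = ∑ w |θ¹|²`, `B = ∑ w (|b|² + |θ¹|²)` real and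
`S = ∑ w conj θ¹ b`, so `det K̄ = -(A B - |S|²)`. The weighted Lagrange identity writes
`A B - |S|²` as a double sum of squares whose cross terms are, up to sign,
`θ¹_j b_i - θ¹_i b_j = θ²_i θ¹_j - θ¹_i θ²_j + (f_i - f_j) θ¹_i θ¹_j`, and the diagonal term
`|θ¹_k|⁴ exp (2 f_k)` makes it positive as soon as `θ¹_k ≠ 0`.
-/

open scoped ComplexConjugate
open Finset

theorem Finset.sum_sum_add_swap {ι R : Type*} [Fintype ι] [CommSemiring R] (h : ι → ι → R) :
    ∑ i, ∑ j, (h i j + h j i) = 2 * ∑ i, ∑ j, h i j := by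
  simp only [sum_add_distrib]
  rw [sum_comm (f := fun i j => h j i)]
  ring

section WeightedLagrange

variable {ι : Type*} [Fintype ι]

theorem Complex.weighted_lagrange_identity (w : ι → ℝ) (a b : ι → ℂ) :
    (∑ i, w i * ‖a i‖ ^ 2) * (∑ i, w i * ‖b i‖ ^ 2) - ‖∑ i, (w i : ℂ) * (conj (a i) * b i)‖ ^ 2
      = (1 / 2) * ∑ i, ∑ j, w i * w j * ‖a i * b j - a j * b i‖ ^ 2 := by
  apply Complex.ofReal_injective
  push_cast
  simp only [← Complex.mul_conj', map_sum, map_mul, map_sub, Complex.conj_ofReal, Complex.conj_conj]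
  set h : ι → ι → ℂ := fun i j =>
    w i * w j * (a i * conj (a i) * (b j * conj (b j)) - conj (a i) * b i * (a j * conj (b j)))
  calc _ = ∑ i, ∑ j, h i j := by
        simp only [h, sum_mul_sum, ← sum_sub_distrib]
        congr! 2 with i - j -; ring
    _ = (1 / 2) * ∑ i, ∑ j, (h i j + h j i) := by rw [sum_sum_add_swap]; ring
    _ = _ := by simp only [h, mul_sum]; congr! 2 with i - j -; ring

theorem Complex.weighted_lagrange_sum_add_sq_eq (w : ι → ℝ) (a b : ι → ℂ) :
    ∑ i, ∑ j, w i * w j * (‖a i * a j‖ ^ 2 + (1 / 2) * ‖a i * b j - a j * b i‖ ^ 2) =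
      (∑ i, w i * ‖a i‖ ^ 2) * (∑ i, w i * (‖b i‖ ^ 2 + ‖a i‖ ^ 2)) -
        ‖∑ i, (w i : ℂ) * (conj (a i) * b i)‖ ^ 2 := by
  have hsq : (∑ i, w i * ‖a i‖ ^ 2) * (∑ i, w i * ‖a i‖ ^ 2) =
      ∑ i, ∑ j, w i * w j * ‖a i * a j‖ ^ 2 := by
    simp only [sum_mul_sum, norm_mul]; congr! 2 with i - j -; ring
  have hB : ∑ i, w i * (‖b i‖ ^ 2 + ‖a i‖ ^ 2) = ∑ i, w i * ‖b i‖ ^ 2 + ∑ i, w i * ‖a i‖ ^ 2 := by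
    simp only [mul_add, sum_add_distrib]
  calc _ = ∑ i, ∑ j, w i * w j * ‖a i * a j‖ ^ 2 +
        (1 / 2) * ∑ i, ∑ j, w i * w j * ‖a i * b j - a j * b i‖ ^ 2 := by
        simp only [mul_sum, ← sum_add_distrib]; congr! 2 with i - j -; ring
    _ = _ := by
      rw [hB, ← hsq, ← Complex.weighted_lagrange_identity]; ring

theorem Complex.weighted_lagrange_sum_add_sq_pos {w : ι → ℝ} (hw : ∀ i, 0 < w i)
    {a : ι → ℂ} (b : ι → ℂ) {k : ι} (hk : a k ≠ 0) :
    0 < ∑ i, ∑ j, w i * w j * (‖a i * a j‖ ^ 2 + (1 / 2) * ‖a i * b j - a j * b i‖ ^ 2) := by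
  have hwk := hw k
  have hkk : 0 < ‖a k * a k‖ := norm_pos_iff.mpr (mul_ne_zero hk hk)
  have hnonneg : ∀ i j, 0 ≤ w i * w j * (‖a i * a j‖ ^ 2 + (1 / 2) * ‖a i * b j - a j * b i‖ ^ 2) :=
    fun i j => mul_nonneg (mul_pos (hw i) (hw j)).le (by positivity)
  exact sum_pos' (fun i _ => sum_nonneg fun j _ => hnonneg i j)
    ⟨k, mem_univ k, sum_pos' (fun j _ => hnonneg k j) ⟨k, mem_univ k, by positivity⟩⟩

end WeightedLagrange

theorem Matrix.det_fin_two_of_offDiag_conj {M : Matrix (Fin 2) (Fin 2) ℂ} {A B : ℝ} {S : ℂ}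
    (hdiag : M 0 0 * M 1 1 = -((A * B : ℝ) : ℂ)) (h01 : M 0 1 = -S) (h10 : M 1 0 = conj S) :
    M.det = -((A * B - ‖S‖ ^ 2 : ℝ) : ℂ) := by
  rw [det_fin_two, hdiag, h01, h10, neg_mul, Complex.mul_conj']
  push_cast
  ring

/-- Explicit formula for `det K̄` in the second-order soliton of
the three-wave system, and its non-vanishing when `θ¹ ≠ 0`. -/
theorem det_Kbar (η : ℝ) (hη : η ≠ 0)
    (f : Fin 3 → ℝ) (θ1 θ2 : Fin 3 → ℂ)
    (Kbar : Matrix (Fin 2) (Fin 2) ℂ)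
    (h11 : Kbar 0 0 = -2 * Complex.I * (η : ℂ) *
      ∑ j, (((‖θ1 j‖) ^ 2 * Real.exp (f j) : ℝ) : ℂ))
    (h12 : Kbar 0 1 = -∑ j,
      (conj (θ1 j) * θ2 j +
          (((f j - 1 : ℝ)) : ℂ) * (((‖θ1 j‖) ^ 2 : ℝ) : ℂ)) *
        ((Real.exp (f j) : ℝ) : ℂ))
    (h21 : Kbar 1 0 = ∑ j,
      (θ1 j * conj (θ2 j) +
          (((f j - 1 : ℝ)) : ℂ) * (((‖θ1 j‖) ^ 2 : ℝ) : ℂ)) *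
        ((Real.exp (f j) : ℝ) : ℂ))
    (h22 : Kbar 1 1 = (1 / (2 * Complex.I * (η : ℂ))) * ∑ j,
      ((((‖θ2 j + (((f j - 1 : ℝ)) : ℂ) * θ1 j‖) ^ 2 +
          (‖θ1 j‖) ^ 2 : ℝ)) : ℂ) *
        ((Real.exp (f j) : ℝ) : ℂ)) :
    Kbar.det = -∑ i, ∑ j,
        ((((‖θ1 i * θ1 j‖) ^ 2 +
            (1 / 2) * (‖θ2 i * θ1 j - θ1 i * θ2 j +
              (((f i - f j : ℝ)) : ℂ) * (θ1 i * θ1 j)‖) ^ 2) *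
          Real.exp (f i + f j) : ℝ) : ℂ) ∧
      ((∃ j, θ1 j ≠ 0) → Kbar.det ≠ 0) := by
  set w : Fin 3 → ℝ := fun j => Real.exp (f j)
  set b : Fin 3 → ℂ := fun j => θ2 j + ((f j - 1 : ℝ) : ℂ) * θ1 j
  set S := ∑ j, (w j : ℂ) * (conj (θ1 j) * b j)
  have hdiag : Kbar 0 0 * Kbar 1 1 =
      -((∑ j, w j * ‖θ1 j‖ ^ 2) * (∑ j, w j * (‖b j‖ ^ 2 + ‖θ1 j‖ ^ 2)) : ℝ) := by
    have hη' : (η : ℂ) ≠ 0 := by exact_mod_cast hη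
    rw [h11, h22]; simp only [w, b]; push_cast
    field_simp
    simp only [mul_comm (Complex.exp _)]
  have h01 : Kbar 0 1 = -S := by
    rw [h12]; congr! 2 with j; simp only [w, b]; push_cast
    rw [← Complex.conj_mul']; ring
  have h10 : Kbar 1 0 = conj S := by
    rw [h21]; simp only [S, map_sum, map_mul, Complex.conj_ofReal, Complex.conj_conj]
    congr! 1 with j; simp only [w, b, map_add, map_mul, Complex.conj_ofReal]; push_cast
    rw [← Complex.mul_conj']; ring
  have hdet := Matrix.det_fin_two_of_offDiag_conj hdiag h01 h10
  rw [← Complex.weighted_lagrange_sum_add_sq_eq] at hdet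
  refine ⟨?_, fun ⟨k, hk⟩ => ?_⟩
  · rw [hdet]
    simp only [Complex.ofReal_sum]
    congr! 4 with i - j -
    have hb : θ2 i * θ1 j - θ1 i * θ2 j + ((f i - f j : ℝ) : ℂ) * (θ1 i * θ1 j) =
        -(θ1 i * b j - θ1 j * b i) := by
      simp only [b]; push_cast; ring
    rw [hb, norm_neg, Real.exp_add]
    ring
  · rw [hdet, neg_ne_zero, Ne, Complex.ofReal_eq_zero]
    exact (Complex.weighted_lagrange_sum_add_sq_pos (fun i => Real.exp_pos (f i)) b hk).ne'
end
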